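/- Write vectors of ℝ⁶ as pairs (u, u*) with u, u* ∈ ℝ³ and equip ℝ⁶ with the bilinear form ⟨(u,u*),(u',u'')⟩ = uᵀu'' + (u*)ᵀu' of signature (3,3). Fix α ∈ ℝ, α ≠ 0. For j = 1, …, r let vⱼ = (uⱼ, uⱼ*) ∈ ℝ⁶, let Aⱼ : ℝ⁶ → ℝ⁶ be the linear map (u, u*) ↦ (α·(uⱼ* × u*), 0), and let γⱼ : x ↦ x + Aⱼx + vⱼ; also let τ₁, …, τ_l be translations by vectors in U = ℝ³ × {0}. Then each γⱼ and each τᵢ is an isometry of the form, and the centralizer of the group Γ generated by γ₁, …, γ_r, τ₁, …, τ_l in the isometry group of the form acts transitively on ℝ⁶; consequently Γ acts freely on ℝ⁶. -/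

import Mathlib

open Matrix

noncomputable section

/-- Vectors of `ℝ⁶` written as pairs `(u, u*)` with `u, u* ∈ ℝ³`. -/
abbrev V18 := (Fin 3 → ℝ) × (Fin 3 → ℝ)

/-- The bilinear form `⟨(u,u*),(u',u'')⟩ = uᵀu'' + (u*)ᵀu'` of signature `(3,3)`. -/
def form18 (x y : V18) : ℝ := x.1 ⬝ᵥ y.2 + x.2 ⬝ᵥ y.1

/-- The linear map `A : (u, u*) ↦ (α (uⱼ* × u*), 0)`. -/
def A18 (α : ℝ) (us : Fin 3 → ℝ) : V18 →ₗ[ℝ] V18 where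
  toFun x := (α • (crossProduct us x.2), 0)
  map_add' a b := by
    simp [Prod.ext_iff, smul_add]
  map_smul' r a := by
    simp [Prod.ext_iff, smul_comm r α]

lemma A18_sq (α : ℝ) (us : Fin 3 → ℝ) (x : V18) :
    A18 α us (A18 α us x) = 0 := by
  simp [A18, Prod.ext_iff]

/-- The linear equivalence `I + A`. -/
def L18 (α : ℝ) (us : Fin 3 → ℝ) : V18 ≃ₗ[ℝ] V18 :=
  LinearEquiv.ofLinear (LinearMap.id + A18 α us) (LinearMap.id - A18 α us)
    (by
      apply LinearMap.ext; intro x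
      simp only [LinearMap.comp_apply, LinearMap.add_apply, LinearMap.sub_apply,
        LinearMap.id_apply, map_sub, A18_sq]
      abel)
    (by
      apply LinearMap.ext; intro x
      simp only [LinearMap.comp_apply, LinearMap.add_apply, LinearMap.sub_apply,
        LinearMap.id_apply, map_add, A18_sq]
      abel)

/-- The affine transformation `γ : x ↦ x + Ax + v`. -/
def gamma18 (α : ℝ) (us : Fin 3 → ℝ) (v : V18) : V18 ≃ᵃ[ℝ] V18 :=
  (L18 α us).toAffineEquiv.trans (AffineEquiv.constVAdd ℝ V18 v)

/-- The translation `τ : x ↦ x + (t, 0)` by a vector of `U = ℝ³ × {0}`. -/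
def tau18 (t : Fin 3 → ℝ) : V18 ≃ᵃ[ℝ] V18 :=
  AffineEquiv.constVAdd ℝ V18 (t, 0)

/-- The isometry group of the form `form18`. -/
def Iso18 : Subgroup (V18 ≃ᵃ[ℝ] V18) where
  carrier := { γ | ∀ x y, form18 (γ.linear x) (γ.linear y) = form18 x y }
  one_mem' := by intro x y; rfl
  mul_mem' := by
    intro a b ha hb x y
    have h : (a * b).linear x = a.linear (b.linear x) := rfl
    have h' : (a * b).linear y = a.linear (b.linear y) := rfl
    rw [h, h', ha, hb]
  inv_mem' := by
    intro a ha x y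
    have h : a.linear ((a⁻¹).linear x) = x := a.linear.apply_symm_apply x
    have h' : a.linear ((a⁻¹).linear y) = y := a.linear.apply_symm_apply y
    calc form18 ((a⁻¹).linear x) ((a⁻¹).linear y)
        = form18 (a.linear ((a⁻¹).linear x)) (a.linear ((a⁻¹).linear y)) := (ha _ _).symm
      _ = form18 x y := by rw [h, h']

/-!
The maps `γ_w : x ↦ w + x + α (w.2 × x.2, 0)`, `w ∈ ℝ⁶`, form a two-step nilpotent group
containing every `γⱼ` (as `vⱼ.2 = uⱼ*`) and every `τᵢ` (as `γ_(t,0)`). A fixed point of `γ_w`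
forces `w.2 = 0` and then `w = 0`, so this group, and hence `Γ`, acts freely. By
anticommutativity of the cross product, the "opposite" isometries
`x ↦ w + x - α (w.2 × x.2, 0)` commute with every `γ_w`, and they already act transitively
on `ℝ⁶`.
-/

section

variable (α : ℝ)

lemma A18_apply (c : Fin 3 → ℝ) (x : V18) :
    A18 α c x = (α • crossProduct c x.2, 0) := rfl

lemma A18_apply_A18 (c d : Fin 3 → ℝ) (x : V18) : A18 α c (A18 α d x) = 0 := by
  simp [A18_apply]

lemma A18_add_left (c d : Fin 3 → ℝ) (x : V18) :
    A18 α (c + d) x = A18 α c x + A18 α d x := by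
  simp [A18_apply, smul_add]

lemma A18_neg_left (c : Fin 3 → ℝ) (x : V18) : A18 α (-c) x = -A18 α c x := by
  simp only [A18_apply, map_neg, LinearMap.neg_apply, smul_neg, Prod.neg_mk, neg_zero]

lemma A18_zero_left (x : V18) : A18 α 0 x = 0 := by
  simp [A18_apply]

lemma gamma18_apply (c : Fin 3 → ℝ) (w x : V18) :
    gamma18 α c w x = w + (x + A18 α c x) := rfl

lemma gamma18_linear_apply (c : Fin 3 → ℝ) (w x : V18) :
    (gamma18 α c w).linear x = x + A18 α c x := rfl

/-- `A18 α c` is skew for `form18` because `(c × x) · y = -x · (c × y)`. -/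
lemma gamma18_mem_Iso18 (c : Fin 3 → ℝ) (w : V18) : gamma18 α c w ∈ Iso18 := by
  intro x y
  have hskew : crossProduct c x.2 ⬝ᵥ y.2 + x.2 ⬝ᵥ crossProduct c y.2 = 0 := by
    simp [crossProduct, dotProduct, Fin.sum_univ_three]
    ring
  simp only [gamma18_linear_apply, A18_apply, form18, Prod.fst_add, Prod.snd_add,
    dotProduct_add, add_dotProduct, smul_dotProduct, dotProduct_smul, smul_eq_mul,
    dotProduct_zero, zero_dotProduct]
  linear_combination α * hskew

lemma tau18_mem_Iso18 (t : Fin 3 → ℝ) : tau18 t ∈ Iso18 := fun _ _ => rfl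

lemma gamma18_zero_zero : gamma18 α 0 0 = 1 :=
  AffineEquiv.ext fun x => by simp [gamma18_apply, A18_zero_left]

lemma tau18_eq_gamma18 (t : Fin 3 → ℝ) : tau18 t = gamma18 α 0 (t, 0) :=
  AffineEquiv.ext fun x => by
    simp only [gamma18_apply, A18_zero_left, add_zero]
    exact vadd_eq_add _ _

lemma gamma18_mul (c d : Fin 3 → ℝ) (w u : V18) :
    gamma18 α c w * gamma18 α d u = gamma18 α (c + d) (w + u + A18 α c u) :=
  AffineEquiv.ext fun x => by
    show gamma18 α c w (gamma18 α d u x) = _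
    simp only [gamma18_apply, map_add, A18_apply_A18, A18_add_left]
    abel

lemma gamma18_inv (c : Fin 3 → ℝ) (w : V18) :
    (gamma18 α c w)⁻¹ = gamma18 α (-c) (-w + A18 α c w) := by
  refine (eq_inv_of_mul_eq_one_left ?_).symm
  rw [gamma18_mul, ← gamma18_zero_zero α]
  congr 1
  · abel
  · simp only [A18_neg_left]
    abel

lemma gamma18_commute {c d : Fin 3 → ℝ} {w u : V18} (h : A18 α c u = A18 α d w) :
    Commute (gamma18 α c w) (gamma18 α d u) := by
  simp only [Commute, SemiconjBy, gamma18_mul, h, add_comm c d, add_comm w u]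

def heis18 : Subgroup (V18 ≃ᵃ[ℝ] V18) where
  carrier := {g | ∃ w : V18, g = gamma18 α w.2 w}
  one_mem' := ⟨0, (gamma18_zero_zero α).symm⟩
  mul_mem' := by
    rintro _ _ ⟨w, rfl⟩ ⟨u, rfl⟩
    refine ⟨w + u + A18 α w.2 u, ?_⟩
    rw [gamma18_mul]
    simp [A18_apply]
  inv_mem' := by
    rintro _ ⟨w, rfl⟩
    refine ⟨-w + A18 α w.2 w, ?_⟩
    rw [gamma18_inv]
    simp [A18_apply]

lemma gamma18_neg_mem_centralizer_heis18 (w : V18) :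
    gamma18 α (-w.2) w ∈ Subgroup.centralizer (heis18 α : Set (V18 ≃ᵃ[ℝ] V18)) := by
  rw [Subgroup.mem_centralizer_iff]
  rintro _ ⟨u, rfl⟩
  refine (gamma18_commute α ?_).eq
  simp only [A18_apply, map_neg, LinearMap.neg_apply, Prod.mk.injEq, and_true]
  rw [cross_anticomm]

lemma exists_gamma18_neg_apply_eq (p q : V18) :
    ∃ w : V18, gamma18 α (-w.2) w p = q := by
  refine ⟨(q.1 - p.1 + α • crossProduct (q.2 - p.2) p.2, q.2 - p.2), ?_⟩
  simp only [gamma18_apply, A18_apply, map_neg, LinearMap.neg_apply, smul_neg]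
  ext i <;> simp
  ring

lemma eq_one_of_mem_heis18_of_apply_eq_self {g : V18 ≃ᵃ[ℝ] V18} (hg : g ∈ heis18 α)
    {x : V18} (hx : g x = x) : g = 1 := by
  obtain ⟨w, rfl⟩ := hg
  have hw₂ : w.2 = 0 := by
    simpa [gamma18_apply, A18_apply] using congrArg Prod.snd hx
  have hw : w = 0 := by
    simpa [gamma18_apply, hw₂, A18_zero_left] using hx
  rw [hw, ← gamma18_zero_zero α]
  rfl

end

theorem homogeneous_from_heisenberg_data_general (α : ℝ)
    (r l : ℕ) (uu : Fin r → Fin 3 → ℝ) (us : Fin r → Fin 3 → ℝ)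
    (v : Fin r → V18) (hv : ∀ j, v j = (uu j, us j))
    (t : Fin l → Fin 3 → ℝ) :
    (∀ j, gamma18 α (us j) (v j) ∈ Iso18) ∧
    (∀ i, tau18 (t i) ∈ Iso18) ∧
    (∀ p q : V18, ∃ z ∈ Iso18 ⊓ Subgroup.centralizer
        ((Subgroup.closure ((Set.range fun j => gamma18 α (us j) (v j)) ∪
          (Set.range fun i => tau18 (t i))) : Subgroup _) : Set (V18 ≃ᵃ[ℝ] V18)),
      z p = q) ∧
    (∀ g ∈ Subgroup.closure ((Set.range fun j => gamma18 α (us j) (v j)) ∪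
        (Set.range fun i => tau18 (t i))),
      (∃ x : V18, g x = x) → g = 1) := by
  have hΓ : Subgroup.closure ((Set.range fun j => gamma18 α (us j) (v j)) ∪
      (Set.range fun i => tau18 (t i))) ≤ heis18 α := by
    rw [Subgroup.closure_le]
    rintro _ (⟨j, rfl⟩ | ⟨i, rfl⟩)
    · exact ⟨v j, by simp [hv j]⟩
    · exact ⟨(t i, 0), tau18_eq_gamma18 α (t i)⟩
  refine ⟨fun j => gamma18_mem_Iso18 α _ _, fun i => tau18_mem_Iso18 _, fun p q => ?_,
    fun g hg ⟨x, hx⟩ => eq_one_of_mem_heis18_of_apply_eq_self α (hΓ hg) hx⟩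
  obtain ⟨w, hw⟩ := exists_gamma18_neg_apply_eq α p q
  exact ⟨_, ⟨gamma18_mem_Iso18 α _ w,
    Subgroup.centralizer_le hΓ (gamma18_neg_mem_centralizer_heis18 α w)⟩, hw⟩

/-- each `γⱼ` and each translation `τᵢ` by a vector of
`U = ℝ³ × {0}` is an isometry of the form, the centralizer of the group `Γ`
they generate acts transitively on `ℝ⁶`, and consequently `Γ` acts freely. -/
theorem homogeneous_from_heisenberg_data (α : ℝ) (hα : α ≠ 0)
    (r l : ℕ) (uu : Fin r → Fin 3 → ℝ) (us : Fin r → Fin 3 → ℝ)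
    (v : Fin r → V18) (hv : ∀ j, v j = (uu j, us j))
    (t : Fin l → Fin 3 → ℝ) :
    (∀ j, gamma18 α (us j) (v j) ∈ Iso18) ∧
    (∀ i, tau18 (t i) ∈ Iso18) ∧
    (∀ p q : V18, ∃ z ∈ Iso18 ⊓ Subgroup.centralizer
        ((Subgroup.closure ((Set.range fun j => gamma18 α (us j) (v j)) ∪
          (Set.range fun i => tau18 (t i))) : Subgroup _) : Set (V18 ≃ᵃ[ℝ] V18)),
      z p = q) ∧
    (∀ g ∈ Subgroup.closure ((Set.range fun j => gamma18 α (us j) (v j)) ∪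
        (Set.range fun i => tau18 (t i))),
      (∃ x : V18, g x = x) → g = 1) :=
  homogeneous_from_heisenberg_data_general α r l uu us v hv t

end
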